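/- Let E₁ be a nonempty set, N ≥ 1 an integer, β > 0, let U : E₁ → ℝ be bounded, and let W : E₁ × E₁ → ℝ be bounded and symmetric. For x ∈ E₁^N define U_N(x) = Σ_{i=1}^N ( U(x_i) + (1/(2N)) Σ_{j≠i} W(x_i, x_j) ), and for i and y ∈ E₁ set p_i(x,y) = min(1, exp(β (U_N(x) − U_N(x^{i→y})))), where x^{i→y} replaces the i-th coordinate of x by y. Then for all i, all y ∈ E₁, and all x, z ∈ E₁^N with x_i = z_i, |p_i(x,y) − p_i(z,y)| ≤ 2 osc(W) β e^{β(osc(U)+osc(W))} · d̄₁(x,z)/N, where d̄₁(x,z) = 2·#{j : x_j ≠ z_j} and osc(f) = sup f − inf f. -/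

import Mathlib

/-! Moving particle `i` from `x i` to `y` changes the energy by `U (x i) - U y` plus `1/(2N)` times
a sum over `j ≠ i` of terms depending only on `x i`, `y` and `x j`. So when `x i = z i` the two
exponents differ by `β/(2N)` times a sum with at most `#{j | x j ≠ z j}` nonzero terms, each of
size at most `4 osc W`, and `r ↦ min 1 (exp r)` is 1-Lipschitz. This already gives half the
bound without the factor `exp (β (osc U + osc W)) ≥ 1`. -/

open Finset

/-- The oscillation `osc f = sup f - inf f` of a real-valued function. -/
noncomputable def oscOf {α : Type*} (f : α → ℝ) : ℝ :=
  sSup (Set.range f) - sInf (Set.range f)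

/-- The mean-field energy
`U_N(x) = ∑_i ( U(x_i) + (1/(2N)) ∑_{j ≠ i} W(x_i, x_j) )`. -/
noncomputable def meanFieldEnergy {E₁ : Type*} (N : ℕ) (U : E₁ → ℝ) (W : E₁ → E₁ → ℝ)
    (x : Fin N → E₁) : ℝ :=
  ∑ i, (U (x i) + (1 / (2 * (N : ℝ))) * ∑ j ∈ Finset.univ.erase i, W (x i) (x j))

/-- The Metropolis–Hastings acceptance probability
`p_i(x,y) = min(1, exp(β (U_N(x) - U_N(x^{i→y}))))` for moving the `i`-th particle to `y`. -/
noncomputable def mhAccept {E₁ : Type*} (N : ℕ) (β : ℝ) (U : E₁ → ℝ) (W : E₁ → E₁ → ℝ)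
    (i : Fin N) (x : Fin N → E₁) (y : E₁) : ℝ :=
  min 1 (Real.exp (β * (meanFieldEnergy N U W x -
    meanFieldEnergy N U W (Function.update x i y))))

lemma abs_sub_le_oscOf {α : Type*} {f : α → ℝ} (ha : BddAbove (Set.range f))
    (hb : BddBelow (Set.range f)) (p q : α) : |f p - f q| ≤ oscOf f := by
  have hp := Set.mem_range_self (f := f) p
  have hq := Set.mem_range_self (f := f) q
  rw [abs_sub_le_iff, oscOf]
  constructor <;> linarith [le_csSup ha hp, csInf_le hb hq, le_csSup ha hq, csInf_le hb hp]

lemma oscOf_nonneg {α : Type*} {f : α → ℝ} (ha : BddAbove (Set.range f))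
    (hb : BddBelow (Set.range f)) (p : α) : 0 ≤ oscOf f :=
  (abs_nonneg _).trans (abs_sub_le_oscOf ha hb p p)

lemma Real.abs_exp_sub_exp_le_of_nonpos {p q : ℝ} (hp : p ≤ 0) (hq : q ≤ 0) :
    |Real.exp p - Real.exp q| ≤ |p - q| := by
  wlog hpq : p ≤ q generalizing p q
  · rw [abs_sub_comm, abs_sub_comm p]
    exact this hq hp (le_of_not_ge hpq)
  rw [abs_of_nonpos (by simpa using Real.exp_le_exp.mpr hpq), abs_of_nonpos (by linarith)]
  -- `exp q - exp p = exp q (1 - exp (p - q)) ≤ exp q (q - p)` and `exp q ≤ 1`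
  have h₁ : 1 - (q - p) ≤ Real.exp (-(q - p)) := Real.one_sub_le_exp_neg _
  have h₂ : Real.exp p = Real.exp q * Real.exp (-(q - p)) := by rw [← Real.exp_add]; ring_nf
  nlinarith [Real.exp_le_one_iff.mpr hq, Real.exp_pos q]

lemma abs_min_one_exp_sub_le (a b : ℝ) :
    |min 1 (Real.exp a) - min 1 (Real.exp b)| ≤ |a - b| := by
  have hmin (c : ℝ) : min 1 (Real.exp c) = Real.exp (min 0 c) := by
    rw [Real.exp_monotone.map_min, Real.exp_zero]
  rw [hmin, hmin]
  calc _ ≤ |min 0 a - min 0 b| :=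
        Real.abs_exp_sub_exp_le_of_nonpos (min_le_left _ _) (min_le_left _ _)
    _ ≤ |a - b| := by simpa using abs_min_sub_min_le_max (0 : ℝ) a 0 b

lemma abs_sum_sub_comp_le {ι E : Type*} [Fintype ι] (s : Finset ι) {f : E → ℝ} {K : ℝ}
    (hK : ∀ v w, |f v - f w| ≤ K) (x z : ι → E) :
    |∑ j ∈ s, (f (x j) - f (z j))| ≤ K * Nat.card {j // x j ≠ z j} := by
  classical
  rw [Nat.card_eq_fintype_card, Fintype.card_subtype, mul_comm]
  calc |∑ j ∈ s, (f (x j) - f (z j))|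
      ≤ ∑ j ∈ s, |f (x j) - f (z j)| := abs_sum_le_sum_abs _ _
    _ = ∑ j ∈ s with x j ≠ z j, |f (x j) - f (z j)| := by
        rw [sum_filter_of_ne]
        intro j _ hj h
        simp [h] at hj
    _ ≤ ∑ j ∈ univ with x j ≠ z j, |f (x j) - f (z j)| :=
        sum_le_sum_of_subset_of_nonneg (filter_subset_filter _ (subset_univ s))
          fun _ _ _ => abs_nonneg _
    _ ≤ _ := by
        rw [← nsmul_eq_mul]
        exact sum_le_card_nsmul _ _ _ fun j _ => hK _ _

/-- The drop in the (two-sided) interaction with a particle at `v` when another particle moves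
from `u` to `y`. -/
def interactionChange {E : Type*} (W : E → E → ℝ) (u y v : E) : ℝ :=
  (W u v - W y v) + (W v u - W v y)

lemma abs_interactionChange_sub_le {E : Type*} {W : E → E → ℝ}
    (ha : BddAbove (Set.range fun p : E × E => W p.1 p.2))
    (hb : BddBelow (Set.range fun p : E × E => W p.1 p.2)) (u y v w : E) :
    |interactionChange W u y v - interactionChange W u y w| ≤
      4 * oscOf (fun p : E × E => W p.1 p.2) := by
  have hW (a b c d : E) : |W a b - W c d| ≤ oscOf (fun p : E × E => W p.1 p.2) :=
    abs_sub_le_oscOf ha hb (a, b) (c, d)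
  calc _ = |(W u v - W u w) + (W y w - W y v) + (W v u - W w u) + (W w y - W v y)| := by
        unfold interactionChange; ring_nf
    _ ≤ _ := by
        linarith [abs_add_le (W u v - W u w + (W y w - W y v) + (W v u - W w u)) (W w y - W v y),
          abs_add_le (W u v - W u w + (W y w - W y v)) (W v u - W w u),
          abs_add_le (W u v - W u w) (W y w - W y v),
          hW u v u w, hW y w y v, hW v u w u, hW w y v y]

lemma meanFieldEnergy_sub_update {E : Type*} (N : ℕ) (U : E → ℝ) (W : E → E → ℝ)
    (i : Fin N) (x : Fin N → E) (y : E) :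
    meanFieldEnergy N U W x - meanFieldEnergy N U W (Function.update x i y) =
      U (x i) - U y + 1 / (2 * (N : ℝ)) *
        ∑ j ∈ univ.erase i, interactionChange W (x i) y (x j) := by
  set x' := Function.update x i y
  have hx'i : x' i = y := Function.update_self _ _ _
  have hx' : ∀ j ∈ univ.erase i, x' j = x j := fun j hj =>
    Function.update_of_ne (ne_of_mem_erase hj) _ _
  have h_self : ∑ j ∈ univ.erase i, W (x' i) (x' j) = ∑ j ∈ univ.erase i, W y (x j) := by
    rw [hx'i]
    exact sum_congr rfl fun j hj => by rw [hx' j hj]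
  have h_other : ∀ k ∈ univ.erase i,
      ∑ j ∈ univ.erase k, W (x k) (x j) - ∑ j ∈ univ.erase k, W (x' k) (x' j) =
        W (x k) (x i) - W (x k) y := by
    intro k hk
    rw [hx' k hk, ← sum_sub_distrib,
      sum_eq_single_of_mem i (mem_erase.mpr ⟨(ne_of_mem_erase hk).symm, mem_univ i⟩)]
    · rw [hx'i]
    · intro j hj hji
      rw [hx' j (mem_erase.mpr ⟨hji, mem_univ j⟩), sub_self]
  unfold meanFieldEnergy
  rw [← add_sum_erase _ _ (mem_univ i), ← add_sum_erase _ _ (mem_univ i), h_self, hx'i]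
  have h_rest :
      ∑ k ∈ univ.erase i, (U (x k) + 1 / (2 * (N : ℝ)) * ∑ j ∈ univ.erase k, W (x k) (x j)) -
        ∑ k ∈ univ.erase i,
          (U (x' k) + 1 / (2 * (N : ℝ)) * ∑ j ∈ univ.erase k, W (x' k) (x' j)) =
        1 / (2 * (N : ℝ)) * ∑ k ∈ univ.erase i, (W (x k) (x i) - W (x k) y) := by
    rw [← sum_sub_distrib, mul_sum]
    refine sum_congr rfl fun k hk => ?_
    rw [← h_other k hk, hx' k hk]
    ring
  simp only [interactionChange, sum_add_distrib, sum_sub_distrib, mul_add, mul_sub] at h_rest ⊢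
  linarith

theorem mhAccept_lipschitz_general {E₁ : Type*} (N : ℕ)
    (β : ℝ) (hβ : 0 < β)
    (U : E₁ → ℝ) (hUa : BddAbove (Set.range U)) (hUb : BddBelow (Set.range U))
    (W : E₁ → E₁ → ℝ)
    (hWa : BddAbove (Set.range fun p : E₁ × E₁ => W p.1 p.2))
    (hWb : BddBelow (Set.range fun p : E₁ × E₁ => W p.1 p.2))
    (i : Fin N) (y : E₁) (x z : Fin N → E₁) (hxz : x i = z i) :
    |mhAccept N β U W i x y - mhAccept N β U W i z y| ≤
      2 * oscOf (fun p : E₁ × E₁ => W p.1 p.2) * β *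
        Real.exp (β * (oscOf U + oscOf fun p : E₁ × E₁ => W p.1 p.2)) *
        ((2 * (Nat.card {j : Fin N // x j ≠ z j} : ℝ)) / N) := by
  set oscW := oscOf fun p : E₁ × E₁ => W p.1 p.2
  set m : ℝ := (Nat.card {j : Fin N // x j ≠ z j} : ℝ)
  have hN : (0 : ℝ) < N := by exact_mod_cast i.pos
  have hoscW : 0 ≤ oscW := oscOf_nonneg hWa hWb (y, y)
  have hexp : 1 ≤ Real.exp (β * (oscOf U + oscW)) :=
    Real.one_le_exp (mul_nonneg hβ.le (add_nonneg (oscOf_nonneg hUa hUb y) hoscW))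
  have h_energy : (meanFieldEnergy N U W x - meanFieldEnergy N U W (Function.update x i y)) -
      (meanFieldEnergy N U W z - meanFieldEnergy N U W (Function.update z i y)) =
        1 / (2 * (N : ℝ)) * ∑ j ∈ univ.erase i,
          (interactionChange W (z i) y (x j) - interactionChange W (z i) y (z j)) := by
    rw [meanFieldEnergy_sub_update, meanFieldEnergy_sub_update, hxz, sum_sub_distrib]
    ring
  have h_sum : |∑ j ∈ univ.erase i,
      (interactionChange W (z i) y (x j) - interactionChange W (z i) y (z j))| ≤ 4 * oscW * m :=
    abs_sum_sub_comp_le _ (abs_interactionChange_sub_le hWa hWb (z i) y) x z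
  calc _ ≤ |β * (meanFieldEnergy N U W x - meanFieldEnergy N U W (Function.update x i y)) -
        β * (meanFieldEnergy N U W z - meanFieldEnergy N U W (Function.update z i y))| :=
        abs_min_one_exp_sub_le _ _
    _ = β / (2 * N) * |∑ j ∈ univ.erase i,
          (interactionChange W (z i) y (x j) - interactionChange W (z i) y (z j))| := by
        rw [← mul_sub, h_energy, abs_mul, abs_mul, abs_of_pos hβ, abs_of_pos (by positivity)]
        ring
    _ ≤ β / (2 * N) * (4 * oscW * m) := by gcongr
    _ = 2 * oscW * β * 1 * (m / N) := by field_simp; ring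
    _ ≤ 2 * oscW * β * Real.exp (β * (oscOf U + oscW)) * (2 * m / N) := by
        gcongr
        linarith [show 0 ≤ m by positivity]

/-- Lipschitz estimate for the Metropolis–Hastings acceptance probability in the
configuration of the other particles: if `x_i = z_i` then
`|p_i(x,y) - p_i(z,y)| ≤ 2 osc(W) β e^{β(osc U + osc W)} d̄₁(x,z)/N`, with
`d̄₁(x,z) = 2 #{j : x_j ≠ z_j}`. -/
theorem mhAccept_lipschitz {E₁ : Type*} [Nonempty E₁] (N : ℕ) (hN : 1 ≤ N)
    (β : ℝ) (hβ : 0 < β)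
    (U : E₁ → ℝ) (hUa : BddAbove (Set.range U)) (hUb : BddBelow (Set.range U))
    (W : E₁ → E₁ → ℝ)
    (hWa : BddAbove (Set.range fun p : E₁ × E₁ => W p.1 p.2))
    (hWb : BddBelow (Set.range fun p : E₁ × E₁ => W p.1 p.2))
    (hWsymm : ∀ u v, W u v = W v u)
    (i : Fin N) (y : E₁) (x z : Fin N → E₁) (hxz : x i = z i) :
    |mhAccept N β U W i x y - mhAccept N β U W i z y| ≤
      2 * oscOf (fun p : E₁ × E₁ => W p.1 p.2) * β *
        Real.exp (β * (oscOf U + oscOf fun p : E₁ × E₁ => W p.1 p.2)) *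
        ((2 * (Nat.card {j : Fin N // x j ≠ z j} : ℝ)) / N) :=
  mhAccept_lipschitz_general N β hβ U hUa hUb W hWa hWb i y x z hxz
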